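/- Let n ≥ 2 and let K be a compact convex subset of Euclidean space ℝⁿ with nonempty interior. For ε ≥ 0 let K^ε denote the closed ε-thickening of K (the set of points at distance at most ε from K). Then μH^{n−1}(frontier K^ε) tends to μH^{n−1}(frontier K) as ε → 0⁺, where μH^{n−1} is the (n−1)-dimensional Hausdorff measure. -/

import Mathlib

/-!
Monotonicity of surface area under inclusion of convex bodies gives the lower bound
`μH[n-1] (∂K) ≤ μH[n-1] (∂K^ε)`: the metric projection onto `K` is 1-Lipschitz, and it maps the
frontier of any bounded `L ⊇ K` onto the frontier of `K`, since a boundary point of `K` is the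
projection of every point of an outer normal ray from it, and that ray must leave `L`.
For the upper bound, if `closedBall x r ⊆ K` then `K^ε` lies in the image of `K` under the
homothety of centre `x` and ratio `1 + ε / r`, whose frontier has measure
`(1 + ε / r) ^ (n - 1) * μH[n-1] (∂K)`, and this tends to `μH[n-1] (∂K)`.
-/

open MeasureTheory Metric Filter Set AffineMap

open scoped RealInnerProductSpace ENNReal NNReal Topology

theorem IsPreconnected.inter_frontier_nonempty {X : Type*} [TopologicalSpace X] {s t : Set X}
    (hs : IsPreconnected s) (hst : (s ∩ t).Nonempty) (hst' : (s \ t).Nonempty) :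
    (s ∩ frontier t).Nonempty := by
  by_contra h
  rw [not_nonempty_iff_eq_empty] at h
  have hcl : closure t ∩ s ⊆ interior t := fun y ⟨hyc, hys⟩ =>
    by_contra fun hyi => h.subset ⟨hys, hyc, hyi⟩
  have hsi : s ⊆ interior t := by
    refine hs.subset_of_closure_inter_subset isOpen_interior ?_ ?_
    · obtain ⟨y, hys, hyt⟩ := hst
      exact ⟨y, hys, hcl ⟨subset_closure hyt, hys⟩⟩
    · exact (inter_subset_inter_left _ (closure_mono interior_subset)).trans hcl
  obtain ⟨y, hys, hyt⟩ := hst'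
  exact hyt (interior_subset (hsi hys))

variable {E : Type*}

section Normed

variable [NormedAddCommGroup E] [NormedSpace ℝ E]

theorem exists_nonneg_add_smul_mem_frontier {L : Set E} (hL : Bornology.IsBounded L) {x v : E}
    (hx : x ∈ L) (hv : v ≠ 0) : ∃ t : ℝ, 0 ≤ t ∧ x + t • v ∈ frontier L := by
  obtain ⟨R, hR⟩ := hL.subset_closedBall x
  have hray : IsPreconnected ((fun t : ℝ => x + t • v) '' Ici 0) :=
    isPreconnected_Ici.image _ (by fun_prop : Continuous fun t : ℝ => x + t • v).continuousOn
  have hin : ((fun t : ℝ => x + t • v) '' Ici 0 ∩ L).Nonempty :=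
    ⟨x, ⟨0, self_mem_Ici, by simp⟩, hx⟩
  have hout : ((fun t : ℝ => x + t • v) '' Ici 0 \ L).Nonempty := by
    have hvpos : 0 < ‖v‖ := norm_pos_iff.2 hv
    refine ⟨_, ⟨(|R| + 1) / ‖v‖, mem_Ici.2 (by positivity), rfl⟩, fun hmem => ?_⟩
    have hdist := hR hmem
    rw [mem_closedBall, dist_eq_norm, add_sub_cancel_left, norm_smul, Real.norm_of_nonneg
      (by positivity), div_mul_cancel₀ _ hvpos.ne'] at hdist
    linarith [le_abs_self R]
  obtain ⟨_, ⟨t, ht, rfl⟩, hfr⟩ := hray.inter_frontier_nonempty hin hout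
  exact ⟨t, ht, hfr⟩

theorem cthickening_subset_image_homothety {K : Set E} (hK : Convex ℝ K) (hKc : IsCompact K)
    {x : E} {r ε : ℝ} (hr : 0 < r) (hε : 0 < ε) (hball : closedBall x r ⊆ K) :
    cthickening ε K ⊆ homothety x (1 + ε / r) '' K := by
  intro z hz
  rw [hKc.cthickening_eq_biUnion_closedBall hε.le] at hz
  obtain ⟨y, hyK, hzy⟩ := mem_iUnion₂.1 hz
  have hb : x + (r / ε) • (z - y) ∈ K := by
    apply hball
    rw [mem_closedBall, dist_eq_norm, add_sub_cancel_left, norm_smul, Real.norm_of_nonneg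
      (by positivity), ← dist_eq_norm]
    calc r / ε * dist z y ≤ r / ε * ε := by gcongr; exact hzy
      _ = r := div_mul_cancel₀ r hε.ne'
  have hc : 1 ≤ 1 + ε / r := le_add_of_nonneg_right (by positivity)
  -- `z = y + (ε / r) • (b - x)` with `b := x + (r / ε) • (z - y)`, and the preimage of that
  -- point under the homothety is a convex combination of `y` and `b`.
  refine ⟨(1 + ε / r)⁻¹ • y + (1 - (1 + ε / r)⁻¹) • (x + (r / ε) • (z - y)),
    hK hyK hb (by positivity) (sub_nonneg.2 (inv_le_one_of_one_le₀ hc)) (by ring), ?_⟩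
  rw [homothety_apply, vsub_eq_sub, vadd_eq_add]
  match_scalars <;> field_simp <;> ring

theorem frontier_image_homothety (x : E) {c : ℝ} (hc : c ≠ 0) (s : Set E) :
    frontier (homothety x c '' s) = homothety x c '' frontier s :=
  let e : E ≃ₜ E :=
    { AffineEquiv.homothetyUnitsMulHom x (Units.mk0 c hc) with
      continuous_toFun := homothety_continuous x c
      continuous_invFun := homothety_continuous x c⁻¹ }
  (e.image_frontier s).symm

end Normed

section InnerProduct

variable [NormedAddCommGroup E] [InnerProductSpace ℝ E]

theorem norm_sub_sq_le_inner_of_inner_nonpos {x y p q : E} (hp : ⟪x - p, q - p⟫ ≤ 0)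
    (hq : ⟪y - q, p - q⟫ ≤ 0) : ‖p - q‖ ^ 2 ≤ ⟪x - y, p - q⟫ := by
  have hsplit : x - y = (x - p) - (y - q) + (p - q) := by abel
  have hneg : ⟪x - p, p - q⟫ = -⟪x - p, q - p⟫ := by rw [← inner_neg_right, neg_sub]
  rw [hsplit, inner_add_left, inner_sub_left, hneg, real_inner_self_eq_norm_sq]
  linarith

variable {K : Set E} {P : E → E}

theorem lipschitzWith_one_of_inner_nonpos (hPK : ∀ z, P z ∈ K)
    (hP : ∀ z, ∀ y ∈ K, ⟪z - P z, y - P z⟫ ≤ 0) : LipschitzWith 1 P := by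
  refine LipschitzWith.of_dist_le_mul fun x y => ?_
  rw [NNReal.coe_one, one_mul, dist_eq_norm, dist_eq_norm]
  have key := norm_sub_sq_le_inner_of_inner_nonpos (hP x _ (hPK y)) (hP y _ (hPK x))
  have hcs := real_inner_le_norm (x - y) (P x - P y)
  nlinarith [norm_nonneg (P x - P y), norm_nonneg (x - y)]

theorem apply_add_eq_of_inner_nonpos (hPK : ∀ z, P z ∈ K)
    (hP : ∀ z, ∀ y ∈ K, ⟪z - P z, y - P z⟫ ≤ 0) {x w : E} (hx : x ∈ K)
    (hw : ∀ y ∈ K, ⟪w, y - x⟫ ≤ 0) : P (x + w) = x := by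
  have key := norm_sub_sq_le_inner_of_inner_nonpos (hP (x + w) x hx)
    (by rw [add_sub_cancel_left]; exact hw _ (hPK (x + w)))
  rwa [sub_self, inner_zero_left, sq_nonpos_iff, norm_eq_zero, sub_eq_zero] at key

theorem IsComplete.exists_proj_of_convex (hc : IsComplete K) (hne : K.Nonempty)
    (hK : Convex ℝ K) : ∃ P : E → E, (∀ z, P z ∈ K) ∧ ∀ z, ∀ y ∈ K, ⟪z - P z, y - P z⟫ ≤ 0 := by
  choose P hPK hP using exists_norm_eq_iInf_of_complete_convex hne hc hK
  exact ⟨P, hPK, fun z => (norm_eq_iInf_iff_real_inner_le_zero hK (hPK z)).1 (hP z)⟩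

variable [CompleteSpace E]

theorem exists_inner_nonpos_of_mem_frontier (hK : Convex ℝ K) (hKi : (interior K).Nonempty)
    {x : E} (hx : x ∈ frontier K) : ∃ v ≠ 0, ∀ y ∈ K, ⟪v, y - x⟫ ≤ 0 := by
  obtain ⟨f, hf⟩ := geometric_hahn_banach_open_point hK.interior isOpen_interior hx.2
  have hfK : K ⊆ {y | f y ≤ f x} := by
    refine subset_closure.trans ?_
    rw [← hK.closure_interior_eq_closure_of_nonempty_interior hKi]
    exact closure_minimal (fun a ha => (hf a ha).le) (isClosed_le f.continuous continuous_const)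
  refine ⟨(InnerProductSpace.toDual ℝ E).symm f, fun h0 => ?_, fun y hy => ?_⟩
  · obtain ⟨a, ha⟩ := hKi
    have := hf a ha
    simp [(InnerProductSpace.toDual ℝ E).symm.map_eq_zero_iff.1 h0] at this
  · rw [InnerProductSpace.toDual_symm_apply, map_sub]
    linarith [show f y ≤ f x from hfK hy]

theorem frontier_subset_image_frontier_of_inner_nonpos (hK : Convex ℝ K) (hKc : IsClosed K)
    (hKi : (interior K).Nonempty) {L : Set E} (hL : Bornology.IsBounded L) (hKL : K ⊆ L)
    (hPK : ∀ z, P z ∈ K) (hP : ∀ z, ∀ y ∈ K, ⟪z - P z, y - P z⟫ ≤ 0) :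
    frontier K ⊆ P '' frontier L := by
  intro x hx
  have hxK : x ∈ K := hKc.frontier_subset hx
  obtain ⟨v, hv0, hv⟩ := exists_inner_nonpos_of_mem_frontier hK hKi hx
  obtain ⟨t, ht, hfr⟩ := exists_nonneg_add_smul_mem_frontier hL (hKL hxK) hv0
  refine ⟨_, hfr, apply_add_eq_of_inner_nonpos hPK hP hxK fun y hy => ?_⟩
  rw [real_inner_smul_left]
  exact mul_nonpos_of_nonneg_of_nonpos ht (hv y hy)

variable [MeasurableSpace E] [BorelSpace E]

theorem Convex.hausdorffMeasure_frontier_le_of_subset {d : ℝ} (hd : 0 ≤ d) (hK : Convex ℝ K)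
    (hKc : IsClosed K) (hKi : (interior K).Nonempty) {L : Set E} (hL : Bornology.IsBounded L)
    (hKL : K ⊆ L) : μH[d] (frontier K) ≤ μH[d] (frontier L) := by
  obtain ⟨P, hPK, hP⟩ :=
    hKc.isComplete.exists_proj_of_convex (hKi.mono interior_subset) hK
  calc μH[d] (frontier K) ≤ μH[d] (P '' frontier L) :=
        measure_mono (frontier_subset_image_frontier_of_inner_nonpos hK hKc hKi hL hKL hPK hP)
    _ ≤ μH[d] (frontier L) := by
        simpa using (lipschitzWith_one_of_inner_nonpos hPK hP).hausdorffMeasure_image_le hd _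

theorem hausdorffMeasure_frontier_cthickening_le {d : ℝ} (hd : 0 ≤ d) (hK : Convex ℝ K)
    (hKc : IsCompact K) {x : E} {r ε : ℝ} (hr : 0 < r) (hε : 0 < ε)
    (hball : closedBall x r ⊆ K) :
    μH[d] (frontier (cthickening ε K)) ≤ ‖1 + ε / r‖₊ ^ d • μH[d] (frontier K) := by
  have hc : 1 + ε / r ≠ 0 := by positivity
  have hKi : (interior K).Nonempty :=
    ⟨x, interior_mono hball (mem_interior_iff_mem_nhds.2 (closedBall_mem_nhds x hr))⟩
  calc μH[d] (frontier (cthickening ε K))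
      ≤ μH[d] (frontier (homothety x (1 + ε / r) '' K)) :=
        (hK.cthickening ε).hausdorffMeasure_frontier_le_of_subset hd isClosed_cthickening
          (hKi.mono (interior_mono (self_subset_cthickening K)))
          ((hKc.image (homothety_continuous x _)).isBounded)
          (cthickening_subset_image_homothety hK hKc hr hε hball)
    _ = ‖1 + ε / r‖₊ ^ d • μH[d] (frontier K) := by
        rw [frontier_image_homothety x hc, hausdorffMeasure_homothety_image hd x hc]

end InnerProduct

/-- The surface area of the outer parallel body `K^ε = cthickening ε K` of a compact
convex body `K ⊆ ℝⁿ` with nonempty interior tends to the surface area of `K` as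
`ε → 0⁺`, where surface area is the `(n-1)`-dimensional Hausdorff measure of the
frontier. -/
theorem surfaceArea_parallelBody_tendsto
    (n : ℕ) (hn : 2 ≤ n)
    (K : Set (EuclideanSpace ℝ (Fin n)))
    (hK_cpt : IsCompact K) (hK_conv : Convex ℝ K) (hK_int : (interior K).Nonempty) :
    Tendsto (fun ε : ℝ => μH[(n : ℝ) - 1] (frontier (cthickening ε K)))
      (nhdsWithin 0 (Set.Ioi 0)) (nhds (μH[(n : ℝ) - 1] (frontier K))) := by
  have hd : (0 : ℝ) ≤ n - 1 := by
    have : (2 : ℝ) ≤ n := by exact_mod_cast hn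
    linarith
  obtain ⟨x, hx⟩ := hK_int
  obtain ⟨r, hr, hball⟩ := nhds_basis_closedBall.mem_iff.1 (mem_interior_iff_mem_nhds.1 hx)
  have hcoef : Tendsto (fun ε : ℝ => ‖1 + ε / r‖₊ ^ ((n : ℝ) - 1)) (𝓝[>] 0) (𝓝 1) := by
    have hcont : Continuous fun ε : ℝ => ‖1 + ε / r‖₊ ^ ((n : ℝ) - 1) := by
      fun_prop (disch := exact hd)
    exact (hcont.tendsto' 0 1 (by simp)).mono_left nhdsWithin_le_nhds
  refine tendsto_of_tendsto_of_tendsto_of_le_of_le' tendsto_const_nhds ?_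
    (eventually_nhdsWithin_of_forall fun ε _ => hK_conv.hausdorffMeasure_frontier_le_of_subset hd
      hK_cpt.isClosed ⟨x, hx⟩ hK_cpt.cthickening.isBounded (self_subset_cthickening K))
    (eventually_nhdsWithin_of_forall fun ε hε =>
      hausdorffMeasure_frontier_cthickening_le hd hK_conv hK_cpt hr hε hball)
  simp only [ENNReal.smul_def, smul_eq_mul]
  simpa using ENNReal.Tendsto.mul_const (ENNReal.tendsto_coe.2 hcoef) (.inl one_ne_zero)
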